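/- Let κ₁, …, κₙ be nested convex families in ℝ^d with n ≥ 1 such that each κᵢ is either constant or continuously shrinking. Suppose ⋂_{i=1}^{n} κᵢ(t₀) is nonempty for some t₀ ≥ 0, let t* = inf { t ≥ 0 | ⋂_{i=1}^{n} κᵢ(t) ≠ ∅ }, and let x* be the lexicographically least point of ⋂_{i=1}^{n} κᵢ(t*). Then there exists a nonempty subset B ⊆ {1,…,n} with |B| ≤ d + 1 such that, setting t*_B = inf { t ≥ 0 | ⋂_{i∈B} κᵢ(t) ≠ ∅ }, one has t*_B = t* and the lexicographically least point of ⋂_{i∈B} κᵢ(t*_B) equals x*. -/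

import Mathlib

/-- A nested convex family in `ℝ^d`. -/
def IsNestedConvexFamily (d : ℕ) (κ : ℝ → Set (EuclideanSpace ℝ (Fin d))) : Prop :=
  (∀ t : ℝ, 0 ≤ t → IsCompact (κ t)) ∧
  (∀ t : ℝ, 0 ≤ t → Convex ℝ (κ t)) ∧
  (∀ a b : ℝ, 0 ≤ a → a ≤ b → κ a ⊆ κ b) ∧
  (∀ t : ℝ, 0 ≤ t → κ t = ⋂ t' ∈ Set.Ioi t, κ t')

/-- The function `f_κ(x) = inf { t ≥ 0 | x ∈ κ t }` determined by a family `κ`. -/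
noncomputable def famFun {d : ℕ} (κ : ℝ → Set (EuclideanSpace ℝ (Fin d)))
    (x : EuclideanSpace ℝ (Fin d)) : ℝ :=
  sInf {t : ℝ | 0 ≤ t ∧ x ∈ κ t}

/-- The family `κ` is constant: `κ t = κ 0` for all `t ≥ 0`. -/
def IsConstantFamily {d : ℕ} (κ : ℝ → Set (EuclideanSpace ℝ (Fin d))) : Prop :=
  ∀ t : ℝ, 0 ≤ t → κ t = κ 0

/-- The family `κ` is continuously shrinking: `f_κ` is not constant on any
nonempty open set, and `κ t'` lies in the interior of `κ t` whenever `t' < t`. -/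
def IsContinuouslyShrinking {d : ℕ} (κ : ℝ → Set (EuclideanSpace ℝ (Fin d))) : Prop :=
  (∀ U : Set (EuclideanSpace ℝ (Fin d)), IsOpen U → U.Nonempty →
    ¬ ∃ c : ℝ, ∀ x ∈ U, famFun κ x = c) ∧
  (∀ t' t : ℝ, 0 ≤ t' → t' < t → κ t' ⊆ interior (κ t))

/-- Lexicographic order on points of `ℝ^d`, by coordinates. -/
def LexLE {d : ℕ} (x y : EuclideanSpace ℝ (Fin d)) : Prop :=
  x = y ∨ ∃ i : Fin d, x i < y i ∧ ∀ j : Fin d, j < i → x j = y j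

/-- `x` is the lexicographically least point of the set `s`. -/
def IsLexLeast {d : ℕ} (s : Set (EuclideanSpace ℝ (Fin d)))
    (x : EuclideanSpace ℝ (Fin d)) : Prop :=
  x ∈ s ∧ ∀ y ∈ s, LexLE x y

/-!
Say that `y` improves on `(T, x)` for a family `κ` if `y ∈ κ t` for some `t < T`, or `y ∈ κ T` and
`y` is lexicographically below `x`; i.e. some pair `(t, y)` with `y ∈ κ t` lies lexicographically
below `(T, x)`, comparing times first. By the choice of `t*` and `x*`, no point improves on
`(t*, x*)` for all the `κᵢ` at once, and any subfamily with the same property is a basis `B`.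
The improving sets are convex: for a continuously shrinking `κ`, the union `U` of the `κ t`,
`t < T`, is open and convex, and `κ T ⊆ closure U` since otherwise `f_κ` would be constantly `T` on
a nonempty open set; adding to `U` a convex part of `κ T` therefore keeps it convex. Helly's
theorem in `ℝ^d` then yields at most `d + 1` improving sets with empty intersection.
-/

open Set

instance Pi.Lex.posSMulStrictMono {ι α β : Type*} [LinearOrder ι] [Zero α] [Preorder α]
    [Zero β] [PartialOrder β] [SMulWithZero α β] [PosSMulStrictMono α β] :
    PosSMulStrictMono α (Lex (ι → β)) where
  smul_lt_smul_of_pos_left a ha x y := by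
    rintro ⟨i, hj, hi⟩
    exact ⟨i, fun j hj' => congrArg (a • ·) (hj j hj'), smul_lt_smul_of_pos_left hi ha⟩

section Lex

variable {d : ℕ}

theorem lexLE_iff_toLex_le {x y : EuclideanSpace ℝ (Fin d)} :
    LexLE x y ↔ toLex (WithLp.ofLp x) ≤ toLex (WithLp.ofLp y) := by
  rw [LexLE, le_iff_eq_or_lt, toLex_inj]
  exact or_congr (WithLp.ofLp_injective 2).eq_iff.symm (exists_congr fun _ => and_comm)

theorem convex_setOf_not_lexLE (x : EuclideanSpace ℝ (Fin d)) :
    Convex ℝ {y | ¬ LexLE x y} := by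
  simp_rw [lexLE_iff_toLex_le, not_le]
  exact (convex_Iio (toLex (WithLp.ofLp x))).is_linear_preimage
    (f := fun y : EuclideanSpace ℝ (Fin d) => toLex (WithLp.ofLp y))
    ⟨fun _ _ => rfl, fun _ _ => rfl⟩

end Lex

theorem Convex.union_inter_of_subset_closure {𝕜 E : Type*} [Field 𝕜] [LinearOrder 𝕜]
    [IsStrictOrderedRing 𝕜] [AddCommGroup E] [Module 𝕜 E] [TopologicalSpace E]
    [IsTopologicalAddGroup E] [ContinuousConstSMul 𝕜 E] {U K L : Set E}
    (hU : Convex 𝕜 U) (hUo : IsOpen U) (hK : Convex 𝕜 K) (hKU : K ⊆ closure U)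
    (hL : Convex 𝕜 L) : Convex 𝕜 (U ∪ (K ∩ L)) := by
  rintro x (hx | hx) y (hy | hy) a b ha hb hab
  · exact Or.inl (hU hx hy ha hb hab)
  · rcases ha.eq_or_lt with rfl | ha
    · rw [zero_add] at hab
      simpa [hab] using Or.inr hy
    · left
      simpa [hUo.interior_eq] using
        hU.combo_interior_closure_mem_interior (by rwa [hUo.interior_eq]) (hKU hy.1) ha hb hab
  · rcases hb.eq_or_lt with rfl | hb
    · rw [add_zero] at hab
      simpa [hab] using Or.inr hx
    · left
      simpa [hUo.interior_eq] using
        hU.combo_closure_interior_mem_interior (hKU hx.1) (by rwa [hUo.interior_eq]) ha hb hab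
  · exact Or.inr ((hK.inter hL) hx hy ha hb hab)

def unionBelow {E : Type*} (κ : ℝ → Set E) (T : ℝ) : Set E := ⋃ t : Ico (0 : ℝ) T, κ t

theorem mem_unionBelow {E : Type*} {κ : ℝ → Set E} {T : ℝ} {y : E} :
    y ∈ unionBelow κ T ↔ ∃ t ∈ Ico 0 T, y ∈ κ t := by
  simp [unionBelow]

theorem subset_unionBelow {E : Type*} (κ : ℝ → Set E) {t T : ℝ} (ht : t ∈ Ico 0 T) :
    κ t ⊆ unionBelow κ T :=
  subset_iUnion (fun t : Ico (0 : ℝ) T => κ t) ⟨t, ht⟩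

theorem MonotoneOn.unionBelow_subset {E : Type*} {κ : ℝ → Set E} (hκ : MonotoneOn κ (Ici 0))
    (T : ℝ) : unionBelow κ T ⊆ κ T := by
  intro y hy
  obtain ⟨t, ⟨ht0, htT⟩, hyt⟩ := mem_unionBelow.mp hy
  exact hκ ht0 (ht0.trans htT.le : (0 : ℝ) ≤ T) htT.le hyt

theorem exists_mem_biInter_of_forall_mem_unionBelow {ι E : Type*}
    {κ : ι → ℝ → Set E} {s : Finset ι} (hs : s.Nonempty)
    (hκ : ∀ i ∈ s, MonotoneOn (κ i) (Ici 0)) {T : ℝ} {y : E}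
    (hy : ∀ i ∈ s, y ∈ unionBelow (κ i) T) : ∃ t ∈ Ico 0 T, y ∈ ⋂ i ∈ s, κ i t := by
  choose! τ hτ hyτ using fun i hi => mem_unionBelow.mp (hy i hi)
  have hτ_le : ∀ i ∈ s, τ i ≤ s.sup' hs τ := fun i hi => Finset.le_sup' τ hi
  have hsup0 : 0 ≤ s.sup' hs τ := by
    obtain ⟨i, hi⟩ := hs
    exact (hτ i hi).1.trans (hτ_le i hi)
  refine ⟨s.sup' hs τ, ⟨hsup0, (Finset.sup'_lt_iff hs).mpr fun i hi => (hτ i hi).2⟩, ?_⟩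
  exact mem_iInter₂.mpr fun i hi => hκ i hi (hτ i hi).1 hsup0 (hτ_le i hi) (hyτ i hi)

section Family

variable {d : ℕ} {κ : ℝ → Set (EuclideanSpace ℝ (Fin d))}

theorem IsNestedConvexFamily.monotoneOn (hκ : IsNestedConvexFamily d κ) :
    MonotoneOn κ (Ici 0) :=
  fun a ha b _ hab => hκ.2.2.1 a b ha hab

theorem IsNestedConvexFamily.convex_unionBelow (hκ : IsNestedConvexFamily d κ) (T : ℝ) :
    Convex ℝ (unionBelow κ T) :=
  Directed.convex_iUnion (Monotone.directed_le fun a b hab => hκ.monotoneOn a.2.1 b.2.1 hab)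
    fun t => hκ.2.1 t t.2.1

theorem IsContinuouslyShrinking.isOpen_unionBelow (hκ : IsContinuouslyShrinking κ) (T : ℝ) :
    IsOpen (unionBelow κ T) := by
  refine isOpen_iff_forall_mem_open.mpr fun y hy => ?_
  obtain ⟨t, ⟨ht0, htT⟩, hyt⟩ := mem_unionBelow.mp hy
  refine ⟨interior (κ ((t + T) / 2)), fun z hz => ?_, isOpen_interior,
    hκ.2 t _ ht0 (by linarith) hyt⟩
  exact mem_unionBelow.mpr ⟨(t + T) / 2, ⟨by linarith, by linarith⟩, interior_subset hz⟩

theorem famFun_eq_of_mem_of_notMem_unionBelow {T : ℝ} {y : EuclideanSpace ℝ (Fin d)}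
    (hT : 0 ≤ T) (hyT : y ∈ κ T) (hy : y ∉ unionBelow κ T) : famFun κ y = T := by
  refine le_antisymm (csInf_le ⟨0, fun t ht => ht.1⟩ ⟨hT, hyT⟩)
    (le_csInf ⟨T, hT, hyT⟩ fun t ht => ?_)
  by_contra! htT
  exact hy (mem_unionBelow.mpr ⟨t, ⟨ht.1, htT⟩, ht.2⟩)

theorem IsContinuouslyShrinking.subset_closure_unionBelow (hκ : IsNestedConvexFamily d κ)
    (hshrink : IsContinuouslyShrinking κ) {T : ℝ} (hU : (unionBelow κ T).Nonempty) :
    κ T ⊆ closure (unionBelow κ T) := by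
  obtain ⟨x, hx⟩ := hU
  obtain ⟨t, ⟨ht0, htT⟩, hxt⟩ := mem_unionBelow.mp hx
  have hT : 0 ≤ T := ht0.trans htT.le
  -- `famFun κ` is constantly `T` on the open set `interior (κ T) \ closure (unionBelow κ T)`
  have hint : interior (κ T) ⊆ closure (unionBelow κ T) := by
    by_contra h
    refine hshrink.1 _ (isOpen_interior.sdiff isClosed_closure) (sdiff_nonempty.mpr h)
      ⟨T, fun y hy => famFun_eq_of_mem_of_notMem_unionBelow hT (interior_subset hy.1)
        fun hyU => hy.2 (subset_closure hyU)⟩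
  calc κ T ⊆ closure (κ T) := subset_closure
    _ = closure (interior (κ T)) :=
      ((hκ.2.1 T hT).closure_interior_eq_closure_of_nonempty_interior
        ⟨x, hshrink.2 t T ht0 htT hxt⟩).symm
    _ ⊆ closure (unionBelow κ T) := closure_minimal hint isClosed_closure

theorem IsConstantFamily.unionBelow_eq (hκ : IsConstantFamily κ) {T : ℝ}
    (hU : (unionBelow κ T).Nonempty) : unionBelow κ T = κ T := by
  obtain ⟨x, hx⟩ := hU
  obtain ⟨t, ⟨ht0, htT⟩, -⟩ := mem_unionBelow.mp hx
  ext y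
  rw [mem_unionBelow, hκ T (ht0.trans htT.le)]
  exact ⟨fun ⟨s, hs, hys⟩ => hκ s hs.1 ▸ hys, fun hy => ⟨t, ⟨ht0, htT⟩, (hκ t ht0).symm ▸ hy⟩⟩

def improvingSet (κ : ℝ → Set (EuclideanSpace ℝ (Fin d))) (T : ℝ)
    (x : EuclideanSpace ℝ (Fin d)) : Set (EuclideanSpace ℝ (Fin d)) :=
  unionBelow κ T ∪ (κ T ∩ {y | ¬ LexLE x y})

theorem convex_improvingSet (hκ : IsNestedConvexFamily d κ)
    (hshrink : IsConstantFamily κ ∨ IsContinuouslyShrinking κ) {T : ℝ} (hT : 0 ≤ T)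
    (x : EuclideanSpace ℝ (Fin d)) : Convex ℝ (improvingSet κ T x) := by
  rcases (unionBelow κ T).eq_empty_or_nonempty with hU | hU
  · rw [improvingSet, hU, empty_union]
    exact (hκ.2.1 T hT).inter (convex_setOf_not_lexLE x)
  rcases hshrink with hconst | hshrink
  · rw [improvingSet, hconst.unionBelow_eq hU, union_eq_left.mpr inter_subset_left]
    exact hκ.2.1 T hT
  · exact (hκ.convex_unionBelow T).union_inter_of_subset_closure
      (hshrink.isOpen_unionBelow T) (hκ.2.1 T hT)
      (hshrink.subset_closure_unionBelow hκ hU) (convex_setOf_not_lexLE x)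

end Family

section Intersection

variable {ι : Type*} {d : ℕ} {κ : ι → ℝ → Set (EuclideanSpace ℝ (Fin d))} {s : Finset ι}
  {T : ℝ} {x : EuclideanSpace ℝ (Fin d)}

theorem biInter_improvingSet_eq_empty (hs : s.Nonempty)
    (hκ : ∀ i ∈ s, MonotoneOn (κ i) (Ici 0)) (hbefore : ∀ t ∈ Ico 0 T, ⋂ i ∈ s, κ i t = ∅)
    (hleast : ∀ y ∈ ⋂ i ∈ s, κ i T, LexLE x y) :
    ⋂ i ∈ s, improvingSet (κ i) T x = ∅ := by
  refine eq_empty_of_forall_notMem fun y hy => ?_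
  rw [mem_iInter₂] at hy
  by_cases hU : ∀ i ∈ s, y ∈ unionBelow (κ i) T
  · obtain ⟨t, ht, hyt⟩ := exists_mem_biInter_of_forall_mem_unionBelow hs hκ hU
    exact (hbefore t ht).subset hyt
  · push Not at hU
    obtain ⟨i, hi, hyi⟩ := hU
    have hyT : y ∈ ⋂ i ∈ s, κ i T := mem_iInter₂.mpr fun j hj =>
      (hy j hj).elim (fun h => (hκ j hj).unionBelow_subset T h) (·.1)
    exact ((hy i hi).resolve_left hyi).2 (hleast y hyT)

theorem biInter_eq_empty_of_biInter_improvingSet_eq_empty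
    (h : ⋂ i ∈ s, improvingSet (κ i) T x = ∅) {t : ℝ} (ht : t ∈ Ico 0 T) :
    ⋂ i ∈ s, κ i t = ∅ :=
  subset_empty_iff.mp <| h ▸ biInter_mono subset_rfl fun i _ =>
    (subset_unionBelow (κ i) ht).trans subset_union_left

theorem lexLE_of_biInter_improvingSet_eq_empty (h : ⋂ i ∈ s, improvingSet (κ i) T x = ∅)
    {y : EuclideanSpace ℝ (Fin d)} (hy : y ∈ ⋂ i ∈ s, κ i T) : LexLE x y := by
  by_contra hxy
  exact eq_empty_iff_forall_notMem.mp h y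
    (mem_iInter₂.mpr fun i hi => Or.inr ⟨mem_iInter₂.mp hy i hi, hxy⟩)

end Intersection

theorem basis_shrinking_general {d n : ℕ} (hn : 1 ≤ n)
    (κ : Fin n → ℝ → Set (EuclideanSpace ℝ (Fin d)))
    (hκ : ∀ i, IsNestedConvexFamily d (κ i))
    (hshrink : ∀ i, IsConstantFamily (κ i) ∨ IsContinuouslyShrinking (κ i))
    (tStar : ℝ)
    (htStar : tStar = sInf {t : ℝ | 0 ≤ t ∧ (⋂ i : Fin n, κ i t).Nonempty})
    (xStar : EuclideanSpace ℝ (Fin d))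
    (hxStar : IsLexLeast (⋂ i : Fin n, κ i tStar) xStar) :
    ∃ B : Finset (Fin n), B.Nonempty ∧ B.card ≤ d + 1 ∧
      sInf {t : ℝ | 0 ≤ t ∧ (⋂ i ∈ B, κ i t).Nonempty} = tStar ∧
      IsLexLeast (⋂ i ∈ B, κ i (sInf {t : ℝ | 0 ≤ t ∧ (⋂ i ∈ B, κ i t).Nonempty}))
        xStar := by
  have htStar0 : 0 ≤ tStar := htStar ▸ Real.sInf_nonneg fun t ht => ht.1
  have hbefore : ∀ t ∈ Ico 0 tStar, ⋂ i ∈ Finset.univ, κ i t = ∅ := fun t ht => by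
    simp only [Finset.mem_univ, iInter_true]
    exact not_nonempty_iff_eq_empty.mp fun h =>
      ht.2.not_ge (htStar ▸ csInf_le ⟨0, fun _ h => h.1⟩ ⟨ht.1, h⟩)
  have hempty : ⋂ i ∈ Finset.univ, improvingSet (κ i) tStar xStar = ∅ :=
    biInter_improvingSet_eq_empty ⟨⟨0, hn⟩, Finset.mem_univ _⟩ (fun i _ => (hκ i).monotoneOn)
      hbefore (by simpa using hxStar.2)
  obtain ⟨B, -, hBcard, hB⟩ : ∃ B ⊆ Finset.univ, B.card ≤ d + 1 ∧
      ⋂ i ∈ B, improvingSet (κ i) tStar xStar = ∅ := by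
    by_contra! h
    refine (Convex.helly_theorem' (fun i _ => convex_improvingSet (hκ i) (hshrink i) htStar0 xStar)
      fun B hB hBcard => ?_).ne_empty hempty
    exact h B hB (by simpa [finrank_euclideanSpace_fin] using hBcard)
  have hxB : xStar ∈ ⋂ i ∈ B, κ i tStar := mem_iInter₂.mpr fun i _ => mem_iInter.mp hxStar.1 i
  have htB : sInf {t : ℝ | 0 ≤ t ∧ (⋂ i ∈ B, κ i t).Nonempty} = tStar :=
    IsLeast.csInf_eq ⟨⟨htStar0, xStar, hxB⟩, fun t ⟨ht0, hne⟩ => not_lt.mp fun htT =>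
      hne.ne_empty (biInter_eq_empty_of_biInter_improvingSet_eq_empty hB ⟨ht0, htT⟩)⟩
  refine ⟨B, Finset.nonempty_iff_ne_empty.mpr ?_, hBcard, htB, ?_⟩
  · rintro rfl
    simp at hB
  · rw [htB]
    exact ⟨hxB, fun y hy => lexLE_of_biInter_improvingSet_eq_empty hB hy⟩

theorem basis_shrinking {d n : ℕ} (hn : 1 ≤ n)
    (κ : Fin n → ℝ → Set (EuclideanSpace ℝ (Fin d)))
    (hκ : ∀ i, IsNestedConvexFamily d (κ i))
    (hshrink : ∀ i, IsConstantFamily (κ i) ∨ IsContinuouslyShrinking (κ i))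
    (t₀ : ℝ) (ht₀ : 0 ≤ t₀) (hne : (⋂ i : Fin n, κ i t₀).Nonempty)
    (tStar : ℝ)
    (htStar : tStar = sInf {t : ℝ | 0 ≤ t ∧ (⋂ i : Fin n, κ i t).Nonempty})
    (xStar : EuclideanSpace ℝ (Fin d))
    (hxStar : IsLexLeast (⋂ i : Fin n, κ i tStar) xStar) :
    ∃ B : Finset (Fin n), B.Nonempty ∧ B.card ≤ d + 1 ∧
      sInf {t : ℝ | 0 ≤ t ∧ (⋂ i ∈ B, κ i t).Nonempty} = tStar ∧
      IsLexLeast (⋂ i ∈ B, κ i (sInf {t : ℝ | 0 ≤ t ∧ (⋂ i ∈ B, κ i t).Nonempty}))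
        xStar :=
  basis_shrinking_general hn κ hκ hshrink tStar htStar xStar hxStar
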